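/- arXiv:1010.1265 — 2 statements merged into one kernel-verified Lean document; each statement's English description precedes it below -/
import Mathlib

section
/- Let ‖·‖ be a strictly convex norm on ℝ², let ℓ > 0, and let S = {z ∈ ℤ² : ‖z‖ = ℓ}. Suppose S has exactly 2m elements for some m ≥ 2. Then S = −S, every point of S is an extreme point of the convex hull of S (so the convex hull of S is a convex integer 2m-gon centrally symmetric with respect to the origin), and every lattice point z ∈ ℤ² lying in the topological interior of the convex hull of S satisfies ‖z‖ < ℓ. -/
/-!
A strictly convex norm has a strictly convex unit ball, so every point of norm `ℓ` is an extreme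
point of any convex set contained in the ball of radius `ℓ`, in particular of the convex hull of
the lattice points of norm `ℓ`. An extreme point is never interior, which gives the last claim.
-/

noncomputable section

/-- The embedding of the integer lattice `ℤ²` into `ℝ²`. -/
def latticeEmbed (z : ℤ × ℤ) : ℝ × ℝ := ((z.1 : ℝ), (z.2 : ℝ))

/-- `N` is a strictly convex norm on `ℝ²`. -/
def IsStrictlyConvexNorm (N : ℝ × ℝ → ℝ) : Prop :=
  (∀ x : ℝ × ℝ, x ≠ 0 → 0 < N x) ∧
  (∀ (c : ℝ) (x : ℝ × ℝ), N (c • x) = |c| * N x) ∧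
  (∀ x y : ℝ × ℝ, N (x + y) ≤ N x + N y) ∧
  (∀ x y : ℝ × ℝ, LinearIndependent ℝ ![x, y] → N (x + y) < N x + N y)

lemma latticeEmbed_neg (z : ℤ × ℤ) : latticeEmbed (-z) = -latticeEmbed z := by
  simp [latticeEmbed]

namespace IsStrictlyConvexNorm

variable {N : ℝ × ℝ → ℝ}

lemma map_smul_of_nonneg (hN : IsStrictlyConvexNorm N) {c : ℝ} (hc : 0 ≤ c) (x : ℝ × ℝ) :
    N (c • x) = c * N x := by
  rw [hN.2.1, abs_of_nonneg hc]

lemma map_neg (hN : IsStrictlyConvexNorm N) (x : ℝ × ℝ) : N (-x) = N x := by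
  simpa using hN.2.1 (-1) x

lemma map_eq_zero_iff (hN : IsStrictlyConvexNorm N) {x : ℝ × ℝ} : N x = 0 ↔ x = 0 := by
  refine ⟨fun h => by_contra fun hx => (hN.1 x hx).ne' h, ?_⟩
  rintro rfl
  simpa using hN.2.1 0 0

lemma map_combo_le (hN : IsStrictlyConvexNorm N) {a b : ℝ} (ha : 0 ≤ a) (hb : 0 ≤ b)
    (x y : ℝ × ℝ) :
    N (a • x + b • y) ≤ a * N x + b * N y := by
  simpa only [hN.map_smul_of_nonneg ha, hN.map_smul_of_nonneg hb] using hN.2.2.1 (a • x) (b • y)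

lemma convex_sublevel (hN : IsStrictlyConvexNorm N) (r : ℝ) : Convex ℝ {x | N x ≤ r} := by
  intro x hx y hy a b ha hb hab
  calc N (a • x + b • y) ≤ a * N x + b * N y := hN.map_combo_le ha hb x y
    _ ≤ a * r + b * r := by gcongr <;> assumption
    _ = r := by rw [← add_mul, hab, one_mul]

lemma map_combo_lt (hN : IsStrictlyConvexNorm N) {a b : ℝ} (ha : 0 < a) (hb : 0 < b)
    (hab : a + b = 1) {x y : ℝ × ℝ} (hxy : N x = N y) (hne : x ≠ y) : N (a • x + b • y) < N x := by
  have hx0 : x ≠ 0 := by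
    rintro rfl
    refine hne (hN.map_eq_zero_iff.1 ?_).symm
    rw [← hxy, hN.map_eq_zero_iff]
  have hNx := hN.1 x hx0
  by_cases hli : LinearIndependent ℝ ![x, y]
  · have hli' := (LinearIndependent.pair_smul_smul_iff ha.ne'.isUnit hb.ne'.isUnit).2 hli
    calc N (a • x + b • y) < N (a • x) + N (b • y) := hN.2.2.2 _ _ hli'
      _ = (a + b) * N x := by
        rw [hN.map_smul_of_nonneg ha.le, hN.map_smul_of_nonneg hb.le, hxy]; ring
      _ = N x := by rw [hab, one_mul]
  · obtain ⟨c, rfl⟩ : ∃ c : ℝ, c • x = y := by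
      simpa using (LinearIndependent.pair_iff' hx0).not.1 hli
    have hc : |c| = 1 := by
      rw [hN.2.1] at hxy
      nlinarith
    rcases abs_eq (zero_le_one' ℝ) |>.1 hc with rfl | rfl
    · exact absurd (one_smul ℝ x).symm hne
    · have habs : |a - b| < 1 := abs_sub_lt_iff.2 ⟨by linarith, by linarith⟩
      calc N (a • x + b • (-1 : ℝ) • x) = |a - b| * N x := by
            rw [← hN.2.1]; congr 1; module
        _ < N x := by nlinarith

lemma mem_extremePoints_of_subset_sublevel (hN : IsStrictlyConvexNorm N) {K : Set (ℝ × ℝ)}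
    {r : ℝ} (hK : K ⊆ {y | N y ≤ r}) {x : ℝ × ℝ} (hxK : x ∈ K) (hx : N x = r) :
    x ∈ K.extremePoints ℝ := by
  refine ⟨hxK, fun x₁ hx₁ x₂ hx₂ hseg => ?_⟩
  obtain ⟨a, b, ha, hb, hab, rfl⟩ := hseg
  have hle : r ≤ a * N x₁ + b * N x₂ := hx ▸ hN.map_combo_le ha.le hb.le x₁ x₂
  have h₁ : N x₁ ≤ r := hK hx₁
  have h₂ : N x₂ ≤ r := hK hx₂
  have hr : a * r + b * r = r := by rw [← add_mul, hab, one_mul]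
  have hx₁r : N x₁ = r := h₁.antisymm <| le_of_mul_le_mul_left
    (by linarith [mul_le_mul_of_nonneg_left h₂ hb.le]) ha
  have hx₂r : N x₂ = r := h₂.antisymm <| le_of_mul_le_mul_left
    (by linarith [mul_le_mul_of_nonneg_left h₁ ha.le]) hb
  obtain rfl : x₁ = x₂ := by
    by_contra hne
    exact (hN.map_combo_lt ha hb hab (hx₁r.trans hx₂r.symm) hne).ne (hx.trans hx₁r.symm)
  rw [Convex.combo_self hab]

end IsStrictlyConvexNorm

theorem level_set_of_strictly_convex_norm_is_symmetric_gon_general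
    (N : ℝ × ℝ → ℝ) (hN : IsStrictlyConvexNorm N)
    (ℓ : ℝ)
    (S : Set (ℤ × ℤ)) (hS : S = {z : ℤ × ℤ | N (latticeEmbed z) = ℓ}) :
    (∀ z : ℤ × ℤ, z ∈ S ↔ -z ∈ S) ∧
    (∀ z ∈ S, latticeEmbed z ∈
      Set.extremePoints ℝ (convexHull ℝ (latticeEmbed '' S))) ∧
    (∀ z : ℤ × ℤ, latticeEmbed z ∈ interior (convexHull ℝ (latticeEmbed '' S)) →
      N (latticeEmbed z) < ℓ) := by
  subst hS
  set K := convexHull ℝ (latticeEmbed '' {z | N (latticeEmbed z) = ℓ})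
  have hK : K ⊆ {y | N y ≤ ℓ} :=
    convexHull_min (by rintro _ ⟨z, hz, rfl⟩; exact hz.le) (hN.convex_sublevel ℓ)
  have hext : ∀ z, N (latticeEmbed z) = ℓ → latticeEmbed z ∈ K.extremePoints ℝ := fun z hz =>
    hN.mem_extremePoints_of_subset_sublevel hK (subset_convexHull ℝ _ ⟨z, hz, rfl⟩) hz
  refine ⟨fun z => ?_, hext, fun z hz => ?_⟩
  · simp only [Set.mem_ofPred_eq, latticeEmbed_neg, hN.map_neg]
  · refine (hK (interior_subset hz)).lt_of_ne fun h => ?_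
    exact Set.disjoint_left.1 (disjoint_interior_extremePoints K) hz (hext z h)

/-- Let `‖·‖` be a strictly convex norm on `ℝ²`, `ℓ > 0`, and suppose the set `S` of
lattice points of norm exactly `ℓ` has exactly `2m` elements, `m ≥ 2`. Then `S = -S`,
every point of `S` is an extreme point of the convex hull of `S` (so this hull is a
convex integer `2m`-gon, centrally symmetric about the origin), and every lattice point
in the interior of the convex hull of `S` has norm `< ℓ`. -/
theorem level_set_of_strictly_convex_norm_is_symmetric_gon
    (N : ℝ × ℝ → ℝ) (hN : IsStrictlyConvexNorm N)
    (ℓ : ℝ) (hℓ : 0 < ℓ) (m : ℕ) (hm : 2 ≤ m)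
    (S : Set (ℤ × ℤ)) (hS : S = {z : ℤ × ℤ | N (latticeEmbed z) = ℓ})
    (hcard : S.ncard = 2 * m) :
    (∀ z : ℤ × ℤ, z ∈ S ↔ -z ∈ S) ∧
    (∀ z ∈ S, latticeEmbed z ∈
      Set.extremePoints ℝ (convexHull ℝ (latticeEmbed '' S))) ∧
    (∀ z : ℤ × ℤ, latticeEmbed z ∈ interior (convexHull ℝ (latticeEmbed '' S)) →
      N (latticeEmbed z) < ℓ) :=
  level_set_of_strictly_convex_norm_is_symmetric_gon_general N hN ℓ S hS

end
end

section
/- Let m ≥ 2 and let Q ⊆ ℝ² be a convex integer 2m-gon that is centrally symmetric with respect to the origin and whose topological boundary contains no points of ℤ² other than its 2m vertices. Then there exists a compact convex set B ⊆ ℝ² such that B = −B, the origin lies in the topological interior of B, B is strictly convex (for all distinct x, y ∈ B and t ∈ (0,1), t·x + (1−t)·y lies in the interior of B), Q ⊆ B, and B ∩ ℤ² = Q ∩ ℤ². -/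
/-!
The gauge `μ` of `Q` is convex, and `|x|² = x₁² + x₂²` is strictly convex, so for `d ≥ 0` the
sublevel set `B_d = {x | d μ(x) + |x|² ≤ d + R}` is strictly convex. If `R` bounds `|x|²` on `Q`,
then `Q ⊆ B_d ⊆ {|x|² ≤ R}`, and a fixed point outside `Q` (where `μ > 1`) leaves `B_d` once
`d` is large. The disc `{|x|² ≤ R}` holds only finitely many lattice points, so for `d` large
enough `B_d` meets the lattice exactly in `Q`. That `0` is an interior point of `Q` follows from
central symmetry once `Q` has interior, which three non-collinear vertices provide.
-/

noncomputable section

open Set Filter Topology Module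

lemma latticeEmbed_injective : Function.Injective latticeEmbed := fun z w h => by
  simpa [latticeEmbed, Prod.ext_iff] using h

lemma finite_range_latticeEmbed_inter {C : Set (ℝ × ℝ)} (hC : IsCompact C) :
    (range latticeEmbed ∩ C).Finite := by
  have htendsto : Tendsto latticeEmbed cofinite (cocompact (ℝ × ℝ)) := by
    rw [← coprod_cofinite, ← coprod_cocompact]
    exact Int.tendsto_coe_cofinite.prodMap_coprod Int.tendsto_coe_cofinite
  have hpre : (latticeEmbed ⁻¹' C).Finite := by
    simpa using htendsto hC.compl_mem_cocompact
  rw [← image_preimage_eq_range_inter]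
  exact hpre.image _

lemma isCompact_setOf_sq_add_sq_le (R : ℝ) : IsCompact {x : ℝ × ℝ | x.1 ^ 2 + x.2 ^ 2 ≤ R} := by
  refine (isCompact_Icc (a := (-(1 + R), -(1 + R))) (b := (1 + R, 1 + R))).of_isClosed_subset
    (isClosed_le (by fun_prop) continuous_const) fun x hx => ?_
  simp only [mem_ofPred_eq] at hx
  have h1 := abs_le.1 (show |x.1| ≤ 1 + R by nlinarith [abs_nonneg x.1, sq_abs x.1, sq_nonneg x.2])
  have h2 := abs_le.1 (show |x.2| ≤ 1 + R by nlinarith [abs_nonneg x.2, sq_abs x.2, sq_nonneg x.1])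
  exact ⟨⟨h1.1, h2.1⟩, ⟨h1.2, h2.2⟩⟩

lemma strictConvexOn_sq_add_sq : StrictConvexOn ℝ univ fun x : ℝ × ℝ => x.1 ^ 2 + x.2 ^ 2 := by
  refine ⟨convex_univ, fun x _ y _ hxy a b ha hb hab => ?_⟩
  obtain rfl : b = 1 - a := by linarith
  have hdist : 0 < (x.1 - y.1) ^ 2 + (x.2 - y.2) ^ 2 := by
    by_contra! h
    exact hxy (Prod.ext (by nlinarith [sq_nonneg (x.1 - y.1), sq_nonneg (x.2 - y.2)])
      (by nlinarith [sq_nonneg (x.1 - y.1), sq_nonneg (x.2 - y.2)]))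
  have key : a * (x.1 ^ 2 + x.2 ^ 2) + (1 - a) * (y.1 ^ 2 + y.2 ^ 2)
      - ((a • x + (1 - a) • y).1 ^ 2 + (a • x + (1 - a) • y).2 ^ 2)
      = a * (1 - a) * ((x.1 - y.1) ^ 2 + (x.2 - y.2) ^ 2) := by
    simp only [Prod.fst_add, Prod.snd_add, Prod.smul_fst, Prod.smul_snd, smul_eq_mul]
    ring
  simp only [smul_eq_mul]
  linarith [mul_pos (mul_pos ha hb) hdist]

section ExtremePoints

variable {𝕜 E : Type*} [Field 𝕜] [LinearOrder 𝕜] [IsStrictOrderedRing 𝕜] [AddCommGroup E]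
  [Module 𝕜 E]

lemma not_collinear_of_mem_extremePoints {A : Set E} {x y z : E} (hx : x ∈ A.extremePoints 𝕜)
    (hy : y ∈ A.extremePoints 𝕜) (hz : z ∈ A.extremePoints 𝕜) (hxy : x ≠ y) (hxz : x ≠ z)
    (hyz : y ≠ z) : ¬ Collinear 𝕜 {x, y, z} := by
  have between {u v w : E} (hu : u ∈ A) (hv : v ∈ A.extremePoints 𝕜) (hw : w ∈ A)
      (h : Wbtw 𝕜 u v w) : u = v ∨ w = v := by
    rw [Wbtw, affineSegment_eq_segment] at h
    exact (mem_extremePoints_iff_forall_segment.1 hv).2 u hu w hw h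
  intro hcol
  rcases hcol.wbtw_or_wbtw_or_wbtw with h | h | h
  · rcases between hx.1 hy hz.1 h with h | h <;> simp_all
  · rcases between hy.1 hz hx.1 h with h | h <;> simp_all
  · rcases between hz.1 hx hy.1 h with h | h <;> simp_all

end ExtremePoints

lemma affineSpan_eq_top_of_not_collinear {V : Type*} [AddCommGroup V] [Module ℝ V]
    [FiniteDimensional ℝ V] (hV : finrank ℝ V = 2) {x y z : V} (h : ¬ Collinear ℝ {x, y, z}) :
    affineSpan ℝ {x, y, z} = ⊤ := by
  have hind := affineIndependent_iff_not_collinear_set.2 h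
  have htop := (hind.affineSpan_eq_top_iff_card_eq_finrank_add_one).2 (by simp [hV])
  rwa [Matrix.range_cons, Matrix.range_cons, Matrix.range_cons, Matrix.range_empty,
    union_empty, singleton_union, singleton_union] at htop

lemma Convex.interior_nonempty_of_three_extremePoints {V : Type*} [NormedAddCommGroup V]
    [NormedSpace ℝ V] [FiniteDimensional ℝ V] (hV : finrank ℝ V = 2) {A : Set V}
    (hA : Convex ℝ A) {x y z : V} (hx : x ∈ A.extremePoints ℝ) (hy : y ∈ A.extremePoints ℝ)
    (hz : z ∈ A.extremePoints ℝ) (hxy : x ≠ y) (hxz : x ≠ z) (hyz : y ≠ z) :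
    (interior A).Nonempty := by
  refine hA.interior_nonempty_iff_affineSpan_eq_top.2 (eq_top_mono (affineSpan_mono ℝ ?_)
    (affineSpan_eq_top_of_not_collinear hV
      (not_collinear_of_mem_extremePoints hx hy hz hxy hxz hyz)))
  exact insert_subset hx.1 (insert_subset hy.1 (singleton_subset_iff.2 hz.1))

lemma convexOn_gauge {E : Type*} [AddCommGroup E] [Module ℝ E] {K : Set E} (hK : Convex ℝ K)
    (habs : Absorbent ℝ K) : ConvexOn ℝ univ (gauge K) := by
  refine ⟨convex_univ, fun x _ y _ a b ha hb _ => ?_⟩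
  calc gauge K (a • x + b • y) ≤ gauge K (a • x) + gauge K (b • y) := gauge_add_le hK habs _ _
    _ = a • gauge K x + b • gauge K y := by rw [gauge_smul_of_nonneg ha, gauge_smul_of_nonneg hb]

section TopologicalVectorSpace

variable {E : Type*} [AddCommGroup E] [Module ℝ E] [TopologicalSpace E]

lemma zero_mem_interior_of_neg_mem [IsTopologicalAddGroup E] [ContinuousSMul ℝ E] {K : Set E}
    (hK : Convex ℝ K) (hneg : ∀ x ∈ K, -x ∈ K) (hint : (interior K).Nonempty) :
    (0 : E) ∈ interior K := by
  obtain ⟨u, hu⟩ := hint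
  have := hK.combo_interior_self_mem_interior hu (hneg u (interior_subset hu))
    (by norm_num : (0 : ℝ) < 1 / 2) (by norm_num : (0 : ℝ) ≤ 1 / 2) (by norm_num)
  rwa [smul_neg, add_neg_cancel] at this

lemma StrictConvexOn.strictConvex_setOf_le {f : E → ℝ} (hf : StrictConvexOn ℝ univ f)
    (hfc : Continuous f) (r : ℝ) : StrictConvex ℝ {x | f x ≤ r} := by
  intro x hx y hy hxy a b ha hb hab
  refine interior_maximal (fun _ h => le_of_lt h) (isOpen_lt hfc continuous_const) ?_
  calc f (a • x + b • y) < a * f x + b * f y := hf.2 trivial trivial hxy ha hb hab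
    _ ≤ a * r + b * r := by gcongr <;> assumption
    _ = r := by rw [← add_mul, hab, one_mul]

lemma one_lt_gauge_of_notMem [IsTopologicalAddGroup E] [ContinuousSMul ℝ E] {K : Set E}
    (hK : Convex ℝ K) (hK0 : K ∈ 𝓝 0) (hKc : IsClosed K) {x : E} (hx : x ∉ K) :
    1 < gauge K x := by
  by_contra! h
  exact hx (hKc.closure_eq ▸ (gauge_le_one_iff_mem_closure hK hK0).1 h)

end TopologicalVectorSpace

def perturbedBody {E : Type*} [AddCommGroup E] [Module ℝ E] (K : Set E) (q : E → ℝ) (R d : ℝ) :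
    Set E :=
  {x | d * gauge K x + q x ≤ d + R}

section PerturbedBody

variable {E : Type*} [AddCommGroup E] [Module ℝ E] {K : Set E} {q : E → ℝ} {R d : ℝ}

lemma subset_perturbedBody (hqK : ∀ x ∈ K, q x ≤ R) (hd : 0 ≤ d) :
    K ⊆ perturbedBody K q R d := fun x hx =>
  add_le_add (mul_le_of_le_one_right hd (gauge_le_one_of_mem hx)) (hqK x hx)

lemma neg_mem_perturbedBody_iff (hKneg : ∀ x ∈ K, -x ∈ K) (hqneg : ∀ x, q (-x) = q x) {x : E} :
    -x ∈ perturbedBody K q R d ↔ x ∈ perturbedBody K q R d := by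
  simp only [perturbedBody, mem_ofPred_eq, gauge_neg hKneg, hqneg]

variable [TopologicalSpace E] [IsTopologicalAddGroup E] [ContinuousSMul ℝ E]

lemma perturbedBody_subset_setOf_le (hK : Convex ℝ K) (hK0 : K ∈ 𝓝 0) (hKc : IsClosed K)
    (hqK : ∀ x ∈ K, q x ≤ R) (hd : 0 ≤ d) : perturbedBody K q R d ⊆ {x | q x ≤ R} := by
  intro x hx
  by_contra hqx
  replace hqx : R < q x := not_le.1 hqx
  have := one_lt_gauge_of_notMem hK hK0 hKc fun hxK => (hqK x hxK).not_gt hqx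
  exact (show d + R < d * gauge K x + q x by nlinarith).not_ge hx

lemma isClosed_perturbedBody (hK : Convex ℝ K) (hK0 : K ∈ 𝓝 0) (hqc : Continuous q) :
    IsClosed (perturbedBody K q R d) :=
  isClosed_le ((continuous_const.mul (continuous_gauge hK hK0)).add hqc) continuous_const

lemma strictConvex_perturbedBody (hK : Convex ℝ K) (hK0 : K ∈ 𝓝 0) (hqc : Continuous q)
    (hqs : StrictConvexOn ℝ univ q) (hd : 0 ≤ d) : StrictConvex ℝ (perturbedBody K q R d) :=
  (((convexOn_gauge hK (absorbent_nhds_zero hK0)).smul hd).add_strictConvexOn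
    hqs).strictConvex_setOf_le ((continuous_const.mul (continuous_gauge hK hK0)).add hqc) _

lemma eventually_notMem_perturbedBody (hK : Convex ℝ K) (hK0 : K ∈ 𝓝 0) (hKc : IsClosed K)
    {x : E} (hx : x ∉ K) : ∀ᶠ d in atTop, x ∉ perturbedBody K q R d := by
  have hgauge := sub_pos.2 (one_lt_gauge_of_notMem hK hK0 hKc hx)
  filter_upwards [eventually_gt_atTop ((R - q x) / (gauge K x - 1))] with d hd hmem
  rw [div_lt_iff₀ hgauge] at hd
  exact (show d + R < d * gauge K x + q x by linarith).not_ge hmem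

lemma exists_perturbedBody_inter_subset (hK : Convex ℝ K) (hK0 : K ∈ 𝓝 0) (hKc : IsClosed K)
    (hqK : ∀ x ∈ K, q x ≤ R) {S : Set E} (hS : (S ∩ {x | q x ≤ R}).Finite) :
    ∃ d, 0 ≤ d ∧ S ∩ perturbedBody K q R d ⊆ K := by
  have hfar : ∀ᶠ d in atTop, ∀ x ∈ (S ∩ {x | q x ≤ R}) \ K, x ∉ perturbedBody K q R d :=
    hS.sdiff.eventually_all.2 fun x hx => eventually_notMem_perturbedBody hK hK0 hKc hx.2
  obtain ⟨d, hd, hdfar⟩ := ((eventually_ge_atTop 0).and hfar).exists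
  refine ⟨d, hd, fun x ⟨hxS, hxB⟩ => ?_⟩
  by_contra hxK
  exact hdfar x ⟨⟨hxS, perturbedBody_subset_setOf_le hK hK0 hKc hqK hd hxB⟩, hxK⟩ hxB

end PerturbedBody

theorem exists_strictly_convex_body_through_vertices_general
    (m : ℕ) (hm : 2 ≤ m)
    (Q : Set (ℝ × ℝ)) (V : Finset (ℤ × ℤ))
    (hVcard : V.card = 2 * m)
    (hQ : Q = convexHull ℝ (latticeEmbed '' ↑V))
    (hext : ∀ z ∈ V, latticeEmbed z ∈ Set.extremePoints ℝ Q)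
    (hsymm : ∀ x : ℝ × ℝ, x ∈ Q ↔ -x ∈ Q) :
    ∃ B : Set (ℝ × ℝ),
      IsCompact B ∧ Convex ℝ B ∧
      (∀ x : ℝ × ℝ, x ∈ B ↔ -x ∈ B) ∧
      (0 : ℝ × ℝ) ∈ interior B ∧
      (∀ x ∈ B, ∀ y ∈ B, x ≠ y → ∀ t : ℝ, t ∈ Set.Ioo (0 : ℝ) 1 →
        t • x + (1 - t) • y ∈ interior B) ∧
      Q ⊆ B ∧
      (∀ z : ℤ × ℤ, latticeEmbed z ∈ B ↔ latticeEmbed z ∈ Q) := by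
  set q : ℝ × ℝ → ℝ := fun x => x.1 ^ 2 + x.2 ^ 2
  have hqc : Continuous q := by fun_prop
  have hQconv : Convex ℝ Q := hQ ▸ convex_convexHull ℝ _
  have hQcomp : IsCompact Q := hQ ▸ (V.finite_toSet.image _).isCompact_convexHull ℝ
  have hQneg : ∀ x ∈ Q, -x ∈ Q := fun x => (hsymm x).1
  obtain ⟨a, b, c, ha, hb, hc, hab, hac, hbc⟩ := Finset.two_lt_card_iff.1 (by omega : 2 < V.card)
  have hQint : (0 : ℝ × ℝ) ∈ interior Q := zero_mem_interior_of_neg_mem hQconv hQneg <|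
    hQconv.interior_nonempty_of_three_extremePoints (by simp) (hext a ha) (hext b hb) (hext c hc)
      (latticeEmbed_injective.ne hab) (latticeEmbed_injective.ne hac)
      (latticeEmbed_injective.ne hbc)
  have hQ0 := mem_interior_iff_mem_nhds.1 hQint
  obtain ⟨R, hR⟩ := hQcomp.bddAbove_image hqc.continuousOn
  have hqQ : ∀ x ∈ Q, q x ≤ R := fun x hx => hR (mem_image_of_mem q hx)
  obtain ⟨d, hd, hlattice⟩ := exists_perturbedBody_inter_subset hQconv hQ0 hQcomp.isClosed hqQ
    (finite_range_latticeEmbed_inter (isCompact_setOf_sq_add_sq_le R))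
  set B := perturbedBody Q q R d
  have hB : StrictConvex ℝ B :=
    strictConvex_perturbedBody hQconv hQ0 hqc strictConvexOn_sq_add_sq hd
  have hQB : Q ⊆ B := subset_perturbedBody hqQ hd
  have hBcomp : IsCompact B :=
    (isCompact_setOf_sq_add_sq_le R).of_isClosed_subset (isClosed_perturbedBody hQconv hQ0 hqc)
      (perturbedBody_subset_setOf_le hQconv hQ0 hQcomp.isClosed hqQ hd)
  refine ⟨B, hBcomp, hB.convex,
    fun x => (neg_mem_perturbedBody_iff hQneg fun x => by simp [q]).symm, interior_mono hQB hQint,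
    fun x hx y hy hxy t ht => hB hx hy hxy ht.1 (sub_pos.2 ht.2) (by ring),
    hQB, fun z => ⟨fun hz => hlattice ⟨mem_range_self z, hz⟩, fun hz => hQB hz⟩⟩

/-- Given a convex integer `2m`-gon `Q` (`m ≥ 2`), centrally symmetric with respect to
the origin, whose boundary contains no lattice points other than its `2m` vertices,
there is a compact, origin-symmetric, strictly convex body `B` with `0` in its interior
such that `Q ⊆ B` and `B` meets the lattice exactly where `Q` does. -/
theorem exists_strictly_convex_body_through_vertices
    (m : ℕ) (hm : 2 ≤ m)
    (Q : Set (ℝ × ℝ)) (V : Finset (ℤ × ℤ))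
    (hVcard : V.card = 2 * m)
    (hQ : Q = convexHull ℝ (latticeEmbed '' ↑V))
    (hext : ∀ z ∈ V, latticeEmbed z ∈ Set.extremePoints ℝ Q)
    (hsymm : ∀ x : ℝ × ℝ, x ∈ Q ↔ -x ∈ Q)
    (hbdry : ∀ z : ℤ × ℤ, latticeEmbed z ∈ frontier Q → z ∈ V) :
    ∃ B : Set (ℝ × ℝ),
      IsCompact B ∧ Convex ℝ B ∧
      (∀ x : ℝ × ℝ, x ∈ B ↔ -x ∈ B) ∧
      (0 : ℝ × ℝ) ∈ interior B ∧
      (∀ x ∈ B, ∀ y ∈ B, x ≠ y → ∀ t : ℝ, t ∈ Set.Ioo (0 : ℝ) 1 →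
        t • x + (1 - t) • y ∈ interior B) ∧
      Q ⊆ B ∧
      (∀ z : ℤ × ℤ, latticeEmbed z ∈ B ↔ latticeEmbed z ∈ Q) :=
  exists_strictly_convex_body_through_vertices_general m hm Q V hVcard hQ hext hsymm

end
end
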